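/- arXiv:1606.06671 — 3 statements merged into one kernel-verified Lean document; each statement's English description precedes it below -/
import Mathlib

section
/- Let a, b be Laurent polynomials in ℤ[A^{±1}], let n be a natural number, and let P, Q be ordinary polynomials in ℤ[A] such that A^n·a = P and A^n·b = Q (under the canonical embedding of ℤ[A] into ℤ[A^{±1}]). Then the ideal of ℤ[A^{±1}] generated by a and b equals the whole ring if and only if some power A^m (m ∈ ℕ) lies in the ideal of the polynomial ring ℤ[A] generated by P and Q. -/
open LaurentPolynomial

/-- Algebraic trivializability of `(a, b)` in `ℤ[A^{±1}]` is equivalent to some power `A^m`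
lying in the ideal of `ℤ[A]` generated by polynomials `P`, `Q` with `A^n·a = P`, `A^n·b = Q`. -/
theorem trivializable_iff_power_mem_polynomial_ideal
    (a b : LaurentPolynomial ℤ) (n : ℕ) (P Q : Polynomial ℤ)
    (hP : T (n : ℤ) * a = Polynomial.toLaurent P)
    (hQ : T (n : ℤ) * b = Polynomial.toLaurent Q) :
    Ideal.span ({a, b} : Set (LaurentPolynomial ℤ)) = ⊤ ↔
      ∃ m : ℕ, (Polynomial.X : Polynomial ℤ) ^ m ∈ Ideal.span ({P, Q} : Set (Polynomial ℤ)) := by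
  constructor
  · intro h
    have h1 : (1 : LaurentPolynomial ℤ) ∈ Ideal.span ({a, b} : Set (LaurentPolynomial ℤ)) := by
      rw [h]; trivial
    rw [Ideal.mem_span_pair] at h1
    obtain ⟨u, v, huv⟩ := h1
    obtain ⟨k₁, U, hU⟩ := u.exists_T_pow
    obtain ⟨k₂, V, hV⟩ := v.exists_T_pow
    refine ⟨n + k₁ + k₂, ?_⟩
    rw [Ideal.mem_span_pair]
    refine ⟨U * Polynomial.X ^ k₂, V * Polynomial.X ^ k₁, ?_⟩
    apply Polynomial.toLaurent_injective
    have hT : (T ((n : ℤ) + (k₁ : ℤ) + (k₂ : ℤ)) : LaurentPolynomial ℤ) = T (k₁ : ℤ) * T (k₂ : ℤ) * T (n : ℤ) := by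
      rw [← T_add, ← T_add]
      ring_nf
    have key : Polynomial.toLaurent
        (U * Polynomial.X ^ k₂ * P + V * Polynomial.X ^ k₁ * Q)
        = T ((n : ℤ) + k₁ + k₂) * (u * a + v * b) := by
      simp only [map_add, map_mul, Polynomial.toLaurent_X_pow, ← hP, ← hQ, hU, hV, hT]
      ring
    rw [key, huv, mul_one, Polynomial.toLaurent_X_pow]
    push_cast
    ring_nf
  · rintro ⟨m, hm⟩
    rw [Ideal.mem_span_pair] at hm
    obtain ⟨f, g, hfg⟩ := hm
    rw [Ideal.eq_top_iff_one, Ideal.mem_span_pair]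
    refine ⟨T (-(m : ℤ)) * Polynomial.toLaurent f * T (n : ℤ),
            T (-(m : ℤ)) * Polynomial.toLaurent g * T (n : ℤ), ?_⟩
    have : Polynomial.toLaurent (f * P + g * Q) = Polynomial.toLaurent (Polynomial.X ^ m) := by
      rw [hfg]
    simp only [map_add, map_mul, ← hP, ← hQ, Polynomial.toLaurent_X_pow] at this
    calc T (-(m : ℤ)) * Polynomial.toLaurent f * T (n : ℤ) * a +
          T (-(m : ℤ)) * Polynomial.toLaurent g * T (n : ℤ) * b
        = T (-(m : ℤ)) * (Polynomial.toLaurent f * (T (n : ℤ) * a) +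
            Polynomial.toLaurent g * (T (n : ℤ) * b)) := by ring
      _ = T (-(m : ℤ)) * T (m : ℤ) := by rw [this]
      _ = 1 := by rw [← T_add]; simp
end

section
/- Let v ≥ 1 be a natural number and let n : ℕ → ℕ be a function such that for every j ≤ v, n(j) is even, n(j) ≤ 2j, and n(j) ≤ 2(v − j). Then Σ_{k=1}^{v} 2·C_{n(k−1)/2} ≤ 4·Σ_{i=0}^{⌊v/2⌋} C_i, where C_m denotes the m-th Catalan number. -/
/-!
At step `k` the partial tangle has `n(k-1) ≤ 2 min(k-1, v-k+1)` endpoints, so by monotonicity of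
the Catalan numbers the `k`-th summand is at most `2 C_{min(j, v-j)}` with `j = k - 1`. As `j` runs
over `0, …, v-1`, the index `min(j, v-j)` stays in `0, …, ⌊v/2⌋` and hits each value at most twice
(once from `j ≤ v/2`, once from `j > v/2`).
-/

open Finset

theorem catalan_le_catalan_succ (m : ℕ) : catalan m ≤ catalan (m + 1) := by
  rw [catalan_succ]
  simpa using single_le_sum (f := fun i : Fin m.succ => catalan i * catalan (m - i))
    (fun i _ => Nat.zero_le _) (mem_univ (Fin.last m))

theorem catalan_mono : Monotone catalan :=
  monotone_nat_of_le_succ catalan_le_catalan_succ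

theorem sum_Icc_one_comp_pred {M : Type*} [AddCommMonoid M] (g : ℕ → M) (v : ℕ) :
    ∑ k ∈ Icc 1 v, g (k - 1) = ∑ j ∈ range v, g j := by
  rw [range_eq_Ico, ← sum_Ico_add_right_sub_eq (c := 1), zero_add, Ico_add_one_right_eq_Icc]

theorem sum_range_comp_min_sub_le {M : Type*} [AddCommMonoid M] [PartialOrder M]
    [CanonicallyOrderedAdd M] (f : ℕ → M) (v : ℕ) :
    ∑ j ∈ range v, f (min j (v - j)) ≤ 2 • ∑ i ∈ range (v / 2 + 1), f i := by
  rw [← sum_filter_add_sum_filter_not (range v) (· ≤ v / 2), two_nsmul]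
  gcongr ?_ + ?_
  · calc ∑ j ∈ range v with j ≤ v / 2, f (min j (v - j))
        = ∑ j ∈ range v with j ≤ v / 2, f j :=
          sum_congr rfl fun j hj => by
            rw [mem_filter] at hj
            rw [min_eq_left (by omega)]
      _ ≤ ∑ i ∈ range (v / 2 + 1), f i :=
          sum_le_sum_of_subset fun j hj => by
            rw [mem_filter] at hj
            exact mem_range.mpr (by omega)
  · calc ∑ j ∈ range v with ¬j ≤ v / 2, f (min j (v - j))
        = ∑ j ∈ range v with ¬j ≤ v / 2, f (v - j) :=
          sum_congr rfl fun j hj => by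
            rw [mem_filter, mem_range] at hj
            rw [min_eq_right (by omega)]
      _ = ∑ i ∈ {j ∈ range v | ¬j ≤ v / 2}.image (v - ·), f i := by
          rw [sum_image fun a ha b hb hab => by
            simp only [coe_filter, mem_range, Set.mem_ofPred_eq] at ha hb hab
            omega]
      _ ≤ ∑ i ∈ range (v / 2 + 1), f i :=
          sum_le_sum_of_subset fun i hi => by
            obtain ⟨j, hj, rfl⟩ := mem_image.mp hi
            rw [mem_filter, mem_range] at hj
            exact mem_range.mpr (by omega)

theorem stepwise_multiplication_count_bound_general
    (v : ℕ) (n : ℕ → ℕ)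
    (hn : ∀ j ≤ v, Even (n j) ∧ n j ≤ 2 * j ∧ n j ≤ 2 * (v - j)) :
    ∑ k ∈ Finset.Icc 1 v, 2 * catalan (n (k - 1) / 2)
      ≤ 4 * ∑ i ∈ Finset.range (v / 2 + 1), catalan i := by
  have half_endpoints_le (j : ℕ) (hj : j ∈ range v) : n j / 2 ≤ min j (v - j) := by
    obtain ⟨-, hleft, hright⟩ := hn j (mem_range.mp hj).le
    omega
  calc ∑ k ∈ Icc 1 v, 2 * catalan (n (k - 1) / 2)
      = ∑ j ∈ range v, 2 * catalan (n j / 2) :=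
        sum_Icc_one_comp_pred (fun j => 2 * catalan (n j / 2)) v
    _ ≤ ∑ j ∈ range v, 2 * catalan (min j (v - j)) :=
        sum_le_sum fun j hj => Nat.mul_le_mul_left 2 (catalan_mono (half_endpoints_le j hj))
    _ ≤ 2 • ∑ i ∈ range (v / 2 + 1), 2 * catalan i :=
        sum_range_comp_min_sub_le (fun i => 2 * catalan i) v
    _ = 4 * ∑ i ∈ range (v / 2 + 1), catalan i := by
        rw [smul_eq_mul, ← mul_sum]
        ring

/-- The multiplication count of the step-by-step Kauffman bracket method:
`Σ_{k=1}^{v} 2·C_{n(k−1)/2} ≤ 4·Σ_{i=0}^{⌊v/2⌋} C_i`. -/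
theorem stepwise_multiplication_count_bound
    (v : ℕ) (hv : 1 ≤ v) (n : ℕ → ℕ)
    (hn : ∀ j ≤ v, Even (n j) ∧ n j ≤ 2 * j ∧ n j ≤ 2 * (v - j)) :
    ∑ k ∈ Finset.Icc 1 v, 2 * catalan (n (k - 1) / 2)
      ≤ 4 * ∑ i ∈ Finset.range (v / 2 + 1), catalan i :=
  stepwise_multiplication_count_bound_general v n hn
end

section
/- For every natural number m ≥ 1, one has 4·Σ_{i=1}^{m} C_i ≤ 80·4^m / (9·√(e·π)·m^{3/2}), where C_i denotes the i-th Catalan number and the right-hand side is a real number. -/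
open Real

namespace CatalanBoundAux

open Stirling Nat Finset

/-- `√π` is a lower bound for the Stirling sequence at positive indices. -/
lemma sqrt_pi_le_stirlingSeq (n : ℕ) : Real.sqrt π ≤ stirlingSeq (n + 1) := by
  have htend : Filter.Tendsto (stirlingSeq ∘ Nat.succ) Filter.atTop (nhds (Real.sqrt π)) :=
    tendsto_stirlingSeq_sqrt_pi.comp (Filter.tendsto_add_atTop_nat 1)
  exact stirlingSeq'_antitone.le_of_tendsto htend n

/-- Sharp upper bound for the central binomial coefficient. -/
lemma centralBinom_bound (k : ℕ) (hk : 1 ≤ k) :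
    (Nat.centralBinom k : ℝ) * (Real.sqrt π * Real.sqrt k) ≤ 4 ^ k := by
  obtain ⟨j, hj⟩ : ∃ j, k = j + 1 := ⟨k - 1, (Nat.succ_pred_eq_of_pos hk).symm⟩
  have hk0 : (0 : ℝ) < k := by exact_mod_cast hk
  have hsk : 0 < stirlingSeq k := by rw [hj]; exact stirlingSeq'_pos j
  have hs2k : 0 < stirlingSeq (2 * k) := by
    rw [show 2 * k = (2 * j + 1) + 1 by omega]; exact stirlingSeq'_pos (2 * j + 1)
  have hπk : Real.sqrt π ≤ stirlingSeq k := by rw [hj]; exact sqrt_pi_le_stirlingSeq j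
  have h12 : stirlingSeq (2 * k) ≤ stirlingSeq k := by
    rw [hj, show 2 * (j + 1) = (2 * j + 1) + 1 by omega]
    exact stirlingSeq'_antitone (show j ≤ 2 * j + 1 by omega)
  -- factorial identities
  have hfac : ((2 * k)! : ℝ) = (Nat.centralBinom k : ℝ) * ((k ! : ℝ) * (k ! : ℝ)) := by
    have h0 := Nat.choose_mul_factorial_mul_factorial (show k ≤ 2 * k by omega)
    have h2 : 2 * k - k = k := by omega
    rw [h2] at h0
    have h1 : Nat.centralBinom k * (k ! * k !) = (2 * k)! := by
      rw [Nat.centralBinom_eq_two_mul_choose, ← mul_assoc]; exact h0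
    exact_mod_cast h1.symm
  set X : ℝ := ((k : ℝ) / Real.exp 1) ^ k with hX
  have hXpos : 0 < X := by positivity
  have hk! : (k ! : ℝ) = stirlingSeq k * (Real.sqrt (2 * (k : ℝ)) * X) := by
    have hden : Real.sqrt (2 * (k : ℝ)) * X ≠ 0 := by positivity
    rw [stirlingSeq, div_mul_cancel₀ _ hden]
  have h2k! : ((2 * k)! : ℝ) = stirlingSeq (2 * k) *
      (Real.sqrt (2 * ((2 * k : ℕ) : ℝ)) * (((2 * k : ℕ) : ℝ) / Real.exp 1) ^ (2 * k)) := by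
    have hden : Real.sqrt (2 * ((2 * k : ℕ) : ℝ)) *
        (((2 * k : ℕ) : ℝ) / Real.exp 1) ^ (2 * k) ≠ 0 := by positivity
    rw [stirlingSeq, div_mul_cancel₀ _ hden]
  have h4 : Real.sqrt (2 * ((2 * k : ℕ) : ℝ)) = 2 * Real.sqrt (k : ℝ) := by
    push_cast
    rw [show 2 * (2 * (k : ℝ)) = 2 ^ 2 * (k : ℝ) by ring,
      Real.sqrt_mul (by norm_num) ((k : ℝ)), Real.sqrt_sq (by norm_num : (0:ℝ) ≤ 2)]
  have h5 : (((2 * k : ℕ) : ℝ) / Real.exp 1) ^ (2 * k) = 4 ^ k * X ^ 2 := by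
    push_cast
    rw [show 2 * (k : ℝ) / Real.exp 1 = 2 * ((k : ℝ) / Real.exp 1) by ring,
      mul_pow, pow_mul 2 2 k, pow_mul' ((k : ℝ) / Real.exp 1) 2 k, ← hX]
    norm_num
  have hsq2k : Real.sqrt (2 * (k : ℝ)) ^ 2 = 2 * (k : ℝ) := Real.sq_sqrt (by positivity)
  -- main identity
  have hmain : (Nat.centralBinom k : ℝ) * stirlingSeq k ^ 2 * (k : ℝ)
      = stirlingSeq (2 * k) * Real.sqrt (k : ℝ) * 4 ^ k := by
    have heq2 : (Nat.centralBinom k : ℝ) * stirlingSeq k ^ 2 *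
        (Real.sqrt (2 * (k : ℝ)) ^ 2 * X ^ 2)
        = stirlingSeq (2 * k) * (2 * Real.sqrt (k : ℝ) * (4 ^ k * X ^ 2)) := by
      calc (Nat.centralBinom k : ℝ) * stirlingSeq k ^ 2 *
            (Real.sqrt (2 * (k : ℝ)) ^ 2 * X ^ 2)
          = (Nat.centralBinom k : ℝ) * ((stirlingSeq k * (Real.sqrt (2 * (k : ℝ)) * X)) *
              (stirlingSeq k * (Real.sqrt (2 * (k : ℝ)) * X))) := by ring
        _ = (Nat.centralBinom k : ℝ) * ((k ! : ℝ) * (k ! : ℝ)) := by rw [← hk!]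
        _ = ((2 * k)! : ℝ) := hfac.symm
        _ = stirlingSeq (2 * k) *
            (Real.sqrt (2 * ((2 * k : ℕ) : ℝ)) * (((2 * k : ℕ) : ℝ) / Real.exp 1) ^ (2 * k)) :=
            h2k!
        _ = stirlingSeq (2 * k) * (2 * Real.sqrt (k : ℝ) * (4 ^ k * X ^ 2)) := by
            rw [h4, h5]
    rw [hsq2k] at heq2
    apply mul_right_cancel₀ (show (2 : ℝ) * X ^ 2 ≠ 0 by positivity)
    linear_combination heq2
  -- conclude
  have hss : stirlingSeq (2 * k) * Real.sqrt π ≤ stirlingSeq k ^ 2 := by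
    calc stirlingSeq (2 * k) * Real.sqrt π ≤ stirlingSeq k * Real.sqrt π := by
          exact mul_le_mul_of_nonneg_right h12 (Real.sqrt_nonneg _)
      _ ≤ stirlingSeq k * stirlingSeq k := mul_le_mul_of_nonneg_left hπk hsk.le
      _ = stirlingSeq k ^ 2 := (sq (stirlingSeq k)).symm
  have h6 : (Nat.centralBinom k : ℝ) * Real.sqrt π * (k : ℝ) ≤ 4 ^ k * Real.sqrt k := by
    have h7 : (Nat.centralBinom k : ℝ) * Real.sqrt π * (k : ℝ) * stirlingSeq k ^ 2
        ≤ 4 ^ k * Real.sqrt k * stirlingSeq k ^ 2 := by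
      calc (Nat.centralBinom k : ℝ) * Real.sqrt π * (k : ℝ) * stirlingSeq k ^ 2
          = (stirlingSeq (2 * k) * Real.sqrt π) * (Real.sqrt (k : ℝ) * 4 ^ k) := by
            linear_combination Real.sqrt π * hmain
        _ ≤ stirlingSeq k ^ 2 * (Real.sqrt (k : ℝ) * 4 ^ k) :=
            mul_le_mul_of_nonneg_right hss (by positivity)
        _ = 4 ^ k * Real.sqrt k * stirlingSeq k ^ 2 := by ring
    exact le_of_mul_le_mul_right h7 (by positivity)
  have hsk0 : 0 < Real.sqrt (k : ℝ) := Real.sqrt_pos.mpr hk0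
  apply le_of_mul_le_mul_right _ hsk0
  calc (Nat.centralBinom k : ℝ) * (Real.sqrt π * Real.sqrt k) * Real.sqrt k
      = (Nat.centralBinom k : ℝ) * Real.sqrt π * (Real.sqrt (k : ℝ) * Real.sqrt (k : ℝ)) := by
        ring
    _ = (Nat.centralBinom k : ℝ) * Real.sqrt π * (k : ℝ) := by
        rw [Real.mul_self_sqrt (by positivity)]
    _ ≤ 4 ^ k * Real.sqrt k := h6

/-- Sharp upper bound for Catalan numbers, in multiplied-out form. -/
lemma catalan_bound (k : ℕ) (hk : 1 ≤ k) :
    (catalan k : ℝ) * (((k : ℝ) + 1) * (Real.sqrt π * Real.sqrt k)) ≤ 4 ^ k := by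
  have hc : ((k : ℝ) + 1) * (catalan k : ℝ) = (Nat.centralBinom k : ℝ) := by
    exact_mod_cast congrArg (Nat.cast (R := ℝ)) (succ_mul_catalan_eq_centralBinom k)
  calc (catalan k : ℝ) * (((k : ℝ) + 1) * (Real.sqrt π * Real.sqrt k))
      = (((k : ℝ) + 1) * (catalan k : ℝ)) * (Real.sqrt π * Real.sqrt k) := by ring
    _ = (Nat.centralBinom k : ℝ) * (Real.sqrt π * Real.sqrt k) := by rw [hc]
    _ ≤ 4 ^ k := centralBinom_bound k hk

lemma sqrt_exp_le : Real.sqrt (Real.exp 1) ≤ 1.64873 := by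
  have h1 : Real.sqrt (Real.exp 1) ^ 2 = Real.exp 1 := Real.sq_sqrt (Real.exp_pos 1).le
  have h2 : Real.exp 1 < 2.7182818286 := Real.exp_one_lt_d9
  nlinarith [Real.sqrt_nonneg (Real.exp 1)]

lemma sqrt_pi_le : Real.sqrt π ≤ 1.772454 := by
  have h1 : Real.sqrt π ^ 2 = π := Real.sq_sqrt Real.pi_pos.le
  have h2 : π < 3.141593 := Real.pi_lt_d6
  nlinarith [Real.sqrt_nonneg π]

/-- The key step inequality, in multiplied-out form. -/
lemma key (n : ℕ) (hn : 3 ≤ n) :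
    36 * Real.sqrt (Real.exp 1) * (((n : ℝ) + 1) * ((n : ℝ) * Real.sqrt n))
      + 20 * (((n : ℝ) + 2) * (((n : ℝ) + 1) * Real.sqrt ((n : ℝ) + 1)))
      ≤ 80 * (((n : ℝ) + 2) * ((n : ℝ) * Real.sqrt n)) := by
  have hn3 : (3 : ℝ) ≤ (n : ℝ) := by exact_mod_cast hn
  have h3 : (0 : ℝ) ≤ (n : ℝ) - 3 := by linarith
  set x : ℝ := Real.sqrt n with hxdef
  set y : ℝ := Real.sqrt ((n : ℝ) + 1) with hydef
  have hx2 : x ^ 2 = (n : ℝ) := Real.sq_sqrt (by positivity)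
  have hy2 : y ^ 2 = (n : ℝ) + 1 := Real.sq_sqrt (by positivity)
  have hx0 : 0 ≤ x := Real.sqrt_nonneg _
  have hy0 : 0 ≤ y := Real.sqrt_nonneg _
  have hA : (0 : ℝ) < 80 * ((n : ℝ) + 2) - 36 * 1.64873 * ((n : ℝ) + 1) := by nlinarith
  have h1 : 20 * (((n : ℝ) + 2) * (((n : ℝ) + 1) * y))
      ≤ (80 * ((n : ℝ) + 2) - 36 * 1.64873 * ((n : ℝ) + 1)) * ((n : ℝ) * x) := by
    apply le_of_pow_le_pow_left₀ two_ne_zero (by positivity)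
    have e1 : (20 * (((n : ℝ) + 2) * (((n : ℝ) + 1) * y))) ^ 2
        = 400 * ((n : ℝ) + 2) ^ 2 * ((n : ℝ) + 1) ^ 2 * y ^ 2 := by ring
    have e2 : ((80 * ((n : ℝ) + 2) - 36 * 1.64873 * ((n : ℝ) + 1)) * ((n : ℝ) * x)) ^ 2
        = (80 * ((n : ℝ) + 2) - 36 * 1.64873 * ((n : ℝ) + 1)) ^ 2 * (n : ℝ) ^ 2 * x ^ 2 := by
      ring
    rw [e1, e2, hx2, hy2]
    nlinarith [pow_nonneg h3 3, pow_nonneg h3 4, pow_nonneg h3 5, sq_nonneg ((n : ℝ) - 3), h3]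
  have hq : Real.sqrt (Real.exp 1) ≤ 1.64873 := sqrt_exp_le
  have hq0 : 0 ≤ Real.sqrt (Real.exp 1) := Real.sqrt_nonneg _
  calc 36 * Real.sqrt (Real.exp 1) * (((n : ℝ) + 1) * ((n : ℝ) * x))
        + 20 * (((n : ℝ) + 2) * (((n : ℝ) + 1) * y))
      ≤ 36 * 1.64873 * (((n : ℝ) + 1) * ((n : ℝ) * x))
        + (80 * ((n : ℝ) + 2) - 36 * 1.64873 * ((n : ℝ) + 1)) * ((n : ℝ) * x) := by
        have hfac : (0 : ℝ) ≤ ((n : ℝ) + 1) * ((n : ℝ) * x) := by positivity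
        have := mul_le_mul_of_nonneg_right
          (mul_le_mul_of_nonneg_left hq (by norm_num : (0:ℝ) ≤ 36)) hfac
        linarith [h1, this]
    _ = 80 * (((n : ℝ) + 2) * ((n : ℝ) * x)) := by ring

/-- The summed bound, in multiplied-out form, for `m ≥ 3`. -/
lemma aux3 (m : ℕ) (hm : 3 ≤ m) :
    (∑ i ∈ Finset.Icc 1 m, (catalan i : ℝ)) *
      (9 * (Real.sqrt (Real.exp 1) * Real.sqrt π) * ((m : ℝ) * Real.sqrt m))
      ≤ 20 * 4 ^ m := by
  induction m, hm using Nat.le_induction with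
  | base =>
    have hIcc : Finset.Icc 1 3 = {1, 2, 3} := by decide
    rw [hIcc]
    have hsum : (∑ i ∈ ({1, 2, 3} : Finset ℕ), (catalan i : ℝ)) = 8 := by
      simp [catalan_one, catalan_two, catalan_three]
      norm_num
    rw [hsum]
    have hq := sqrt_exp_le
    have hp := sqrt_pi_le
    have h3 : Real.sqrt (3 : ℝ) ≤ 1.7320509 := by
      have h1 : Real.sqrt (3 : ℝ) ^ 2 = 3 := Real.sq_sqrt (by norm_num)
      nlinarith [Real.sqrt_nonneg (3 : ℝ)]
    have hq0 : 0 ≤ Real.sqrt (Real.exp 1) := Real.sqrt_nonneg _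
    have hp0 : 0 ≤ Real.sqrt π := Real.sqrt_nonneg _
    have h30 : 0 ≤ Real.sqrt (3 : ℝ) := Real.sqrt_nonneg _
    push_cast
    nlinarith [mul_nonneg hq0 hp0, mul_nonneg (mul_nonneg hq0 hp0) h30]
  | succ n hn ih =>
    have hn1 : (1 : ℕ) ≤ n + 1 := by omega
    rw [Finset.sum_Icc_succ_top hn1]
    have hcat := catalan_bound (n + 1) hn1
    push_cast at hcat ⊢
    set q : ℝ := Real.sqrt (Real.exp 1) with hqdef
    set p : ℝ := Real.sqrt π with hpdef
    set x : ℝ := Real.sqrt (n : ℝ) with hxdef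
    set y : ℝ := Real.sqrt ((n : ℝ) + 1) with hydef
    have hn0 : (0 : ℝ) < (n : ℝ) := by
      have : (3 : ℝ) ≤ (n : ℝ) := by exact_mod_cast hn
      linarith
    have hx0 : 0 < x := Real.sqrt_pos.mpr hn0
    have hp0 : 0 < p := Real.sqrt_pos.mpr Real.pi_pos
    have hq0 : 0 < q := Real.sqrt_pos.mpr (Real.exp_pos 1)
    have hy0 : 0 < y := Real.sqrt_pos.mpr (by linarith)
    have hc : (0 : ℝ) < (n : ℝ) * x * ((n : ℝ) + 2) * p := by positivity
    apply le_of_mul_le_mul_right _ hc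
    have hkey := key n hn
    rw [← hqdef, ← hxdef, ← hydef] at hkey
    have hS : (0 : ℝ) ≤ ∑ i ∈ Finset.Icc 1 n, (catalan i : ℝ) := by positivity
    calc ((∑ i ∈ Finset.Icc 1 n, (catalan i : ℝ)) + (catalan (n + 1) : ℝ)) *
          (9 * (q * p) * (((n : ℝ) + 1) * y)) * ((n : ℝ) * x * ((n : ℝ) + 2) * p)
        = ((∑ i ∈ Finset.Icc 1 n, (catalan i : ℝ)) * (9 * (q * p) * ((n : ℝ) * x))) *
            (((n : ℝ) + 1) * ((n : ℝ) + 2) * p * y)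
          + ((catalan (n + 1) : ℝ) * (((n : ℝ) + 1 + 1) * (p * y))) *
            (9 * q * p * (((n : ℝ) + 1) * ((n : ℝ) * x))) := by ring
      _ ≤ (20 * 4 ^ n) * (((n : ℝ) + 1) * ((n : ℝ) + 2) * p * y)
          + (4 ^ (n + 1)) * (9 * q * p * (((n : ℝ) + 1) * ((n : ℝ) * x))) := by
          apply _root_.add_le_add
          · exact mul_le_mul_of_nonneg_right ih (by positivity)
          · exact mul_le_mul_of_nonneg_right hcat (by positivity)
      _ = (p * 4 ^ n) * (36 * q * (((n : ℝ) + 1) * ((n : ℝ) * x))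
            + 20 * (((n : ℝ) + 2) * (((n : ℝ) + 1) * y))) := by ring
      _ ≤ (p * 4 ^ n) * (80 * (((n : ℝ) + 2) * ((n : ℝ) * x))) :=
          mul_le_mul_of_nonneg_left hkey (by positivity)
      _ = 20 * 4 ^ (n + 1) * ((n : ℝ) * x * ((n : ℝ) + 2) * p) := by ring

/-- The summed bound, in multiplied-out form, for all `m ≥ 1`. -/
lemma aux (m : ℕ) (hm : 1 ≤ m) :
    (∑ i ∈ Finset.Icc 1 m, (catalan i : ℝ)) *
      (9 * (Real.sqrt (Real.exp 1) * Real.sqrt π) * ((m : ℝ) * Real.sqrt m))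
      ≤ 20 * 4 ^ m := by
  have hq := sqrt_exp_le
  have hp := sqrt_pi_le
  have hq0 : 0 ≤ Real.sqrt (Real.exp 1) := Real.sqrt_nonneg _
  have hp0 : 0 ≤ Real.sqrt π := Real.sqrt_nonneg _
  rcases Nat.lt_or_ge m 3 with h | h
  · interval_cases m
    · have hIcc : Finset.Icc 1 1 = {1} := by decide
      rw [hIcc]
      simp only [Finset.sum_singleton, catalan_one, Nat.cast_one]
      push_cast
      rw [Real.sqrt_one]
      nlinarith [mul_nonneg hq0 hp0]
    · have hIcc : Finset.Icc 1 2 = {1, 2} := by decide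
      rw [hIcc]
      have hsum : (∑ i ∈ ({1, 2} : Finset ℕ), (catalan i : ℝ)) = 3 := by
        simp [catalan_one, catalan_two]
        norm_num
      rw [hsum]
      have h2 : Real.sqrt (2 : ℝ) ≤ 1.4142136 := by
        have h1 : Real.sqrt (2 : ℝ) ^ 2 = 2 := Real.sq_sqrt (by norm_num)
        nlinarith [Real.sqrt_nonneg (2 : ℝ)]
      have h20 : 0 ≤ Real.sqrt (2 : ℝ) := Real.sqrt_nonneg _
      push_cast
      nlinarith [mul_nonneg hq0 hp0, mul_nonneg (mul_nonneg hq0 hp0) h20]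
  · exact aux3 m h

end CatalanBoundAux

/-- Explicit bound for the Catalan number sum:
`4·Σ_{i=1}^{m} C_i ≤ 80·4^m / (9·√(e·π)·m^{3/2})`. -/
theorem catalan_sum_explicit_bound (m : ℕ) (hm : 1 ≤ m) :
    (4 * ∑ i ∈ Finset.Icc 1 m, catalan i : ℝ)
      ≤ 80 * 4 ^ m / (9 * Real.sqrt (Real.exp 1 * Real.pi) * (m : ℝ) ^ ((3 : ℝ) / 2)) := by
  have hm0 : (0 : ℝ) < (m : ℝ) := by exact_mod_cast hm
  have hrpow : (m : ℝ) ^ ((3 : ℝ) / 2) = (m : ℝ) * Real.sqrt m := by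
    rw [show (3 : ℝ) / 2 = 1 + 1 / 2 by norm_num, Real.rpow_add hm0, Real.rpow_one,
      Real.sqrt_eq_rpow]
  have hsqrt : Real.sqrt (Real.exp 1 * π) = Real.sqrt (Real.exp 1) * Real.sqrt π :=
    Real.sqrt_mul (Real.exp_pos 1).le π
  have hd : (0 : ℝ) < 9 * Real.sqrt (Real.exp 1 * π) * ((m : ℝ) * Real.sqrt m) := by
    have h1 : 0 < Real.sqrt (Real.exp 1 * π) := Real.sqrt_pos.mpr (by positivity)
    have h2 : 0 < Real.sqrt (m : ℝ) := Real.sqrt_pos.mpr hm0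
    positivity
  rw [hrpow, le_div_iff₀ hd]
  have haux := CatalanBoundAux.aux m hm
  rw [hsqrt]
  push_cast
  nlinarith [haux]
end
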